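/- arXiv:1507.06772 — 5 statements merged into one kernel-verified Lean document; each statement's English description precedes it below -/
import Mathlib

section
/- Let ε_st > ε_∞ > 0, ω_T > 0, c > 0 and k > 0 be real numbers, set ω_L := ω_T·√(ε_st/ε_∞), and let X₋ ≤ X₊ be the two real roots of P(X) = ε_∞·X² − (ε_st·ω_T² + c²·k²)·X + c²·k²·ω_T². Then X₋ < ω_T² and X₊ > ω_L². In particular neither root lies in the closed interval [ω_T², ω_L²]. -/
/-!
Since `ε_∞ > 0`, the quadratic `P` is negative exactly strictly between its two roots. A direct
computation gives `P(ω_T²) = (ε_∞ - ε_st) ω_T⁴ < 0` and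
`P(ω_L²) = (ε_∞ - ε_st) c²k²ω_T² / ε_∞ < 0`, so both ends of the stop band lie strictly between
`X₋` and `X₊`.
-/

section Quadratic

variable {K : Type*}

theorem quadratic_eq_mul_sub_mul_sub [CommRing K] {a b c r s : K}
    (hr : a * r ^ 2 + b * r + c = 0) (hsum : a * (r + s) = -b) (x : K) :
    a * x ^ 2 + b * x + c = a * (x - r) * (x - s) := by
  linear_combination hr + (x - r) * hsum

theorem quadratic_eq_zero_of_reflect [Field K] {a b c r : K} (ha : a ≠ 0)
    (hr : a * r ^ 2 + b * r + c = 0) :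
    a * (-b / a - r) ^ 2 + b * (-b / a - r) + c = 0 := by
  field_simp
  linear_combination a * hr

theorem mul_add_eq_neg_of_quadratic_roots [Field K] {a b c r s : K} (ha : a ≠ 0)
    (hr : a * r ^ 2 + b * r + c = 0) (hs : a * s ^ 2 + b * s + c = 0)
    (hroots : ∀ x, a * x ^ 2 + b * x + c = 0 → x = r ∨ x = s) :
    a * (r + s) = -b := by
  by_cases hrs : r = s
  · -- a double root is the fixed point of the reflection `x ↦ -b/a - x` of the roots
    subst hrs
    have hfix : -b / a - r = r := (hroots _ (quadratic_eq_zero_of_reflect ha hr)).elim id id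
    field_simp at hfix
    linear_combination -hfix
  · have hdiff : (r - s) * (a * (r + s) + b) = 0 := by linear_combination hr - hs
    linear_combination (mul_eq_zero.1 hdiff).resolve_left (sub_ne_zero.2 hrs)

theorem mem_Ioo_of_mul_sub_mul_sub_neg [CommRing K] [LinearOrder K] [IsStrictOrderedRing K]
    {a r s t : K} (ha : 0 < a) (hrs : r ≤ s) (ht : a * (t - r) * (t - s) < 0) :
    t ∈ Set.Ioo r s := by
  constructor
  · by_contra! htr
    exact ht.not_ge <| mul_nonneg_of_nonpos_of_nonpos
      (mul_nonpos_of_nonneg_of_nonpos ha.le (sub_nonpos.2 htr)) (sub_nonpos.2 (htr.trans hrs))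
  · by_contra! hst
    exact ht.not_ge <| mul_nonneg
      (mul_nonneg ha.le (sub_nonneg.2 (hrs.trans hst))) (sub_nonneg.2 hst)

end Quadratic

/-- The two roots `X₋ ≤ X₊` of the polariton dispersion quadratic
`P(X) = ε_∞ X² - (ε_st ω_T² + c²k²) X + c²k²ω_T²` satisfy `X₋ < ω_T²` and
`X₊ > ω_L²` where `ω_L = ω_T √(ε_st/ε_∞)`; in particular neither root lies in
the closed interval `[ω_T², ω_L²]`. -/
theorem dispersion_roots_avoid_stop_band (εst εinf ωT c k : ℝ)
    (hinf : 0 < εinf) (hst : εinf < εst) (hωT : 0 < ωT) (hc : 0 < c) (hk : 0 < k)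
    (ωL : ℝ) (hωL : ωL = ωT * Real.sqrt (εst / εinf))
    (P : ℝ → ℝ)
    (hP : ∀ X : ℝ, P X = εinf * X ^ 2 - (εst * ωT ^ 2 + c ^ 2 * k ^ 2) * X
      + c ^ 2 * k ^ 2 * ωT ^ 2)
    (Xm Xp : ℝ) (hle : Xm ≤ Xp) (hm : P Xm = 0) (hp : P Xp = 0)
    (hroots : ∀ X : ℝ, P X = 0 → X = Xm ∨ X = Xp) :
    Xm < ωT ^ 2 ∧ Xp > ωL ^ 2 ∧
      Xm ∉ Set.Icc (ωT ^ 2) (ωL ^ 2) ∧ Xp ∉ Set.Icc (ωT ^ 2) (ωL ^ 2) := by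
  have hP' (X : ℝ) : P X = εinf * X ^ 2 + -(εst * ωT ^ 2 + c ^ 2 * k ^ 2) * X
      + c ^ 2 * k ^ 2 * ωT ^ 2 := by rw [hP]; ring
  have hsum := mul_add_eq_neg_of_quadratic_roots hinf.ne' ((hP' Xm).symm.trans hm)
    ((hP' Xp).symm.trans hp) fun X hX => hroots X ((hP' X).trans hX)
  have hfac (X : ℝ) : P X = εinf * (X - Xm) * (X - Xp) :=
    (hP' X).trans (quadratic_eq_mul_sub_mul_sub ((hP' Xm).symm.trans hm) hsum X)
  have hPT : P (ωT ^ 2) = (εinf - εst) * ωT ^ 4 := by rw [hP]; ring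
  have hωL2 : ωL ^ 2 = εst / εinf * ωT ^ 2 := by
    rw [hωL, mul_pow, Real.sq_sqrt (div_pos (hinf.trans hst) hinf).le, mul_comm]
  have hPL : P (ωL ^ 2) = (εinf - εst) / εinf * (c ^ 2 * k ^ 2 * ωT ^ 2) := by
    rw [hP, hωL2]; field_simp; ring
  have hT : ωT ^ 2 ∈ Set.Ioo Xm Xp := mem_Ioo_of_mul_sub_mul_sub_neg hinf hle <| by
    rw [← hfac, hPT]; exact mul_neg_of_neg_of_pos (by linarith) (by positivity)
  have hL : ωL ^ 2 ∈ Set.Ioo Xm Xp := mem_Ioo_of_mul_sub_mul_sub_neg hinf hle <| by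
    rw [← hfac, hPL]
    exact mul_neg_of_neg_of_pos (div_neg_of_neg_of_pos (by linarith) hinf) (by positivity)
  exact ⟨hT.1, hL.2, fun h => h.1.not_gt hT.1, fun h => h.2.not_gt hL.2⟩
end

section
/- Let ε_∞ and ε_st be real numbers with ε_st > ε_∞ > 0 and ε_st ≥ 1, let ω_T > 0 and c > 0, and define ε(ω) = ε_∞ + ω_T²·(ε_st − ε_∞)/(ω_T² − ω²). Let k₀ > 0 and suppose ω : ℝ → ℝ is differentiable at k₀ and satisfies, for all k in some open neighborhood of k₀, both 0 < ω(k) < ω_T and c²·k² = ω(k)²·ε(ω(k)). Then the group velocity satisfies 0 < ω′(k₀) < c. -/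
/-!
Differentiating the dispersion relation `c²k² = ω²ε(ω)` at `k₀` gives `ω D ω' = c²k₀`, where
`D = ε + ω ε'(ω) / 2 = ε_∞ + ω_T⁴(ε_st − ε_∞)/(ω_T² − ω²)²`. Hence `ω' > 0`, and
`(D ω')² = c² ε`. Below `ω_T` the permittivity satisfies `1 ≤ ε_st ≤ ε < D`, so `ε ≤ ε² < D²`
and therefore `ω' < c`.
-/

open Filter Topology

theorem HasDerivAt.mul_eq_of_eventuallyEq_comp {𝕜 : Type*} [NontriviallyNormedField 𝕜]
    {g h ω : 𝕜 → 𝕜} {k₀ g' h' ω' : 𝕜} (hg : HasDerivAt g g' (ω k₀))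
    (hω : HasDerivAt ω ω' k₀) (hh : HasDerivAt h h' k₀) (heq : h =ᶠ[𝓝 k₀] g ∘ ω) :
    g' * ω' = h' :=
  ((hg.comp k₀ hω).congr_of_eventuallyEq heq).unique hh

section Polariton

variable (εst εinf ωT : ℝ)

noncomputable def polaritonPermittivity (y : ℝ) : ℝ :=
  εinf + ωT ^ 2 * (εst - εinf) / (ωT ^ 2 - y ^ 2)

variable {εst εinf ωT}

theorem hasDerivAt_sq_mul_polaritonPermittivity {y : ℝ} (hy : ωT ^ 2 - y ^ 2 ≠ 0) :
    HasDerivAt (fun y => y ^ 2 * polaritonPermittivity εst εinf ωT y)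
      (2 * y * (εinf + (εst - εinf) * ωT ^ 4 / (ωT ^ 2 - y ^ 2) ^ 2)) y := by
  have hsq : HasDerivAt (fun y : ℝ => y ^ 2) (2 * y) y := by
    simpa using hasDerivAt_pow 2 y
  have hε : HasDerivAt (polaritonPermittivity εst εinf ωT)
      (ωT ^ 2 * (εst - εinf) * (2 * y) / (ωT ^ 2 - y ^ 2) ^ 2) y :=
    (((hasDerivAt_const y _).div (hsq.const_sub (ωT ^ 2)) hy).const_add εinf).congr_deriv
      (by ring)
  refine (hsq.mul hε).congr_deriv ?_
  unfold polaritonPermittivity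
  field_simp
  ring

theorem le_polaritonPermittivity (hst : εinf ≤ εst) {y : ℝ} (hy : y ^ 2 < ωT ^ 2) :
    εst ≤ polaritonPermittivity εst εinf ωT y := by
  have hu : 0 < ωT ^ 2 - y ^ 2 := sub_pos.2 hy
  have : εst - εinf ≤ ωT ^ 2 * (εst - εinf) / (ωT ^ 2 - y ^ 2) := by
    rw [le_div_iff₀ hu]
    nlinarith [sq_nonneg y]
  unfold polaritonPermittivity
  linarith

theorem polaritonPermittivity_lt (hst : εinf < εst) {y : ℝ} (hy : y ≠ 0) (hωT : ωT ≠ 0)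
    (hu : ωT ^ 2 - y ^ 2 ≠ 0) :
    polaritonPermittivity εst εinf ωT y < εinf + (εst - εinf) * ωT ^ 4 / (ωT ^ 2 - y ^ 2) ^ 2 := by
  have hdiff : εinf + (εst - εinf) * ωT ^ 4 / (ωT ^ 2 - y ^ 2) ^ 2
      - polaritonPermittivity εst εinf ωT y
      = (εst - εinf) * ωT ^ 2 * y ^ 2 / (ωT ^ 2 - y ^ 2) ^ 2 := by
    unfold polaritonPermittivity
    field_simp
    ring
  have : 0 < (εst - εinf) * ωT ^ 2 * y ^ 2 / (ωT ^ 2 - y ^ 2) ^ 2 := by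
    have := sub_pos.2 hst
    positivity
  linarith

end Polariton

theorem pos_and_lt_of_dispersion {c k ω₀ E D v : ℝ} (hc : 0 < c) (hk : 0 < k) (hω₀ : 0 < ω₀)
    (hE : 1 ≤ E) (hED : E < D) (hdisp : c ^ 2 * k ^ 2 = ω₀ ^ 2 * E)
    (hv : ω₀ * D * v = c ^ 2 * k) : 0 < v ∧ v < c := by
  have hD : 0 < D := by linarith
  have hv_pos : 0 < v := pos_of_mul_pos_right (hv ▸ by positivity : 0 < ω₀ * D * v) (by positivity)
  have hDv : (D * v) ^ 2 = c ^ 2 * E := by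
    have : ω₀ ^ 2 * (D * v) ^ 2 = ω₀ ^ 2 * (c ^ 2 * E) := by
      linear_combination (ω₀ * D * v + c ^ 2 * k) * hv + c ^ 2 * hdisp
    exact mul_left_cancel₀ (by positivity) this
  have hE_lt : E < D ^ 2 := by nlinarith
  have hsq : (D * v) ^ 2 < (D * c) ^ 2 := by
    rw [hDv, mul_pow, mul_comm (D ^ 2)]
    exact mul_lt_mul_of_pos_left hE_lt (by positivity)
  exact ⟨hv_pos, lt_of_mul_lt_mul_left (lt_of_pow_lt_pow_left₀ 2 (by positivity) hsq) hD.le⟩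

theorem group_velocity_pos_lt_c_general (εst εinf ωT c : ℝ)
    (hst : εinf < εst) (hst1 : 1 ≤ εst) (hc : 0 < c)
    (ε : ℝ → ℝ)
    (hε : ∀ ω : ℝ, ε ω = εinf + ωT ^ 2 * (εst - εinf) / (ωT ^ 2 - ω ^ 2))
    (ω : ℝ → ℝ) (k₀ : ℝ) (hk₀ : 0 < k₀)
    (hdiff : DifferentiableAt ℝ ω k₀)
    (hnbhd : ∃ s : Set ℝ, IsOpen s ∧ k₀ ∈ s ∧ ∀ k ∈ s,
      0 < ω k ∧ ω k < ωT ∧ c ^ 2 * k ^ 2 = (ω k) ^ 2 * ε (ω k)) :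
    0 < deriv ω k₀ ∧ deriv ω k₀ < c := by
  obtain rfl : ε = polaritonPermittivity εst εinf ωT := funext hε
  obtain ⟨s, hs, hk₀s, hprop⟩ := hnbhd
  obtain ⟨hω₀, hω₀T, hdisp⟩ := hprop k₀ hk₀s
  have hsq : ω k₀ ^ 2 < ωT ^ 2 := by gcongr
  have hu : ωT ^ 2 - ω k₀ ^ 2 ≠ 0 := (sub_pos.2 hsq).ne'
  have hslope := (hasDerivAt_sq_mul_polaritonPermittivity hu).mul_eq_of_eventuallyEq_comp
    hdiff.hasDerivAt ((hasDerivAt_pow 2 k₀).const_mul (c ^ 2))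
    (eventually_of_mem (hs.mem_nhds hk₀s) fun k hk => (hprop k hk).2.2)
  refine pos_and_lt_of_dispersion hc hk₀ hω₀
    (hst1.trans (le_polaritonPermittivity hst.le hsq))
    (polaritonPermittivity_lt hst hω₀.ne' (hω₀.trans hω₀T).ne' hu) hdisp ?_
  simp only [Nat.cast_ofNat] at hslope
  linear_combination hslope / 2

/-- Group velocity of the lower polariton branch: if `ω(k)` is differentiable at
`k₀ > 0` and satisfies `0 < ω(k) < ω_T` and the dispersion relation
`c²k² = ω(k)² ε(ω(k))` on an open neighborhood of `k₀`, then `0 < ω'(k₀) < c`. -/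
theorem group_velocity_pos_lt_c (εst εinf ωT c : ℝ)
    (hinf : 0 < εinf) (hst : εinf < εst) (hst1 : 1 ≤ εst) (hωT : 0 < ωT) (hc : 0 < c)
    (ε : ℝ → ℝ)
    (hε : ∀ ω : ℝ, ε ω = εinf + ωT ^ 2 * (εst - εinf) / (ωT ^ 2 - ω ^ 2))
    (ω : ℝ → ℝ) (k₀ : ℝ) (hk₀ : 0 < k₀)
    (hdiff : DifferentiableAt ℝ ω k₀)
    (hnbhd : ∃ s : Set ℝ, IsOpen s ∧ k₀ ∈ s ∧ ∀ k ∈ s,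
      0 < ω k ∧ ω k < ωT ∧ c ^ 2 * k ^ 2 = (ω k) ^ 2 * ε (ω k)) :
    0 < deriv ω k₀ ∧ deriv ω k₀ < c :=
  group_velocity_pos_lt_c_general εst εinf ωT c hst hst1 hc ε hε ω k₀ hk₀ hdiff hnbhd
end

section
/- Let η be the 4×4 real diagonal matrix diag(1, −1, −1, −1) and let n₀ : Fin 4 → ℝ be the null vector (1,0,0,1). The set S := {A : Matrix (Fin 4) (Fin 4) ℝ | Aᵀ · η · A = η ∧ det A = 1 ∧ 0 < A 0 0 ∧ A.mulVec n₀ = n₀} is a group under matrix multiplication, and it is isomorphic as a group to the semidirect product ℂ ⋊ Circle, where Circle (the unit circle group in ℂ) acts on the additive group ℂ by multiplication u • w = u·w. -/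
open Matrix

/-- Rotation of the additive group `ℂ` by a unit complex number `u : Circle`,
`w ↦ u * w`. -/
noncomputable def Circle.rotAddAut : Circle →* Multiplicative (AddAut ℂ) :=
  DistribMulAction.toAddAut Circle ℂ

/-- The action of the circle group on the additive group `ℂ` (written
multiplicatively as `Multiplicative ℂ`) by complex multiplication `u • w = u * w`. -/
noncomputable def Circle.rotMulAut : Circle →* MulAut (Multiplicative ℂ) where
  toFun u := AddEquiv.toMultiplicative (Multiplicative.toAdd (Circle.rotAddAut u))
  map_one' := by
    ext w
    simp [Circle.rotAddAut, DistribMulAction.toAddAut]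
  map_mul' u v := by
    ext w
    simp [Circle.rotAddAut, DistribMulAction.toAddAut, mul_smul]

/-! Every element of the little group factors uniquely as `N(w) R(u)`, a null rotation `N(w)`
(`w ∈ ℂ`) after a rotation `R(u)` (`u ∈ Circle`) of the `(x, y)`-plane. The null rotations form a
copy of `(ℂ, +)`, the rotations a copy of `Circle`, and `R(u) N(w) R(u)⁻¹ = N(u w)`, so
`(w, u) ↦ N(w) R(u)` is an injective homomorphism out of `ℂ ⋊ Circle`.

Conversely, let `A` be Lorentz with `A n₀ = n₀`. Then also `Aᵀ (η n₀) = η n₀`, and these linear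
relations together with the Gram relations `AᵀηA = η` on the columns express every entry of `A`
through `w = A₁₀ + i A₂₀` and `u = A₁₁ + i A₂₁`; the middle `2 × 2` block, a priori orthogonal, is
a rotation because `det A = 1`. -/

theorem Circle.rotMulAut_ofAdd (u : Circle) (w : ℂ) :
    Circle.rotMulAut u (Multiplicative.ofAdd w) = Multiplicative.ofAdd ((u : ℂ) * w) :=
  rfl

theorem Matrix.det_fin_four {R : Type*} [CommRing R] (A : Matrix (Fin 4) (Fin 4) R) :
    A.det = A 0 0 * (A 1 1 * A 2 2 * A 3 3 - A 1 1 * A 2 3 * A 3 2 - A 1 2 * A 2 1 * A 3 3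
        + A 1 2 * A 2 3 * A 3 1 + A 1 3 * A 2 1 * A 3 2 - A 1 3 * A 2 2 * A 3 1)
      - A 0 1 * (A 1 0 * A 2 2 * A 3 3 - A 1 0 * A 2 3 * A 3 2 - A 1 2 * A 2 0 * A 3 3
        + A 1 2 * A 2 3 * A 3 0 + A 1 3 * A 2 0 * A 3 2 - A 1 3 * A 2 2 * A 3 0)
      + A 0 2 * (A 1 0 * A 2 1 * A 3 3 - A 1 0 * A 2 3 * A 3 1 - A 1 1 * A 2 0 * A 3 3
        + A 1 1 * A 2 3 * A 3 0 + A 1 3 * A 2 0 * A 3 1 - A 1 3 * A 2 1 * A 3 0)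
      - A 0 3 * (A 1 0 * A 2 1 * A 3 2 - A 1 0 * A 2 2 * A 3 1 - A 1 1 * A 2 0 * A 3 2
        + A 1 1 * A 2 2 * A 3 0 + A 1 2 * A 2 0 * A 3 1 - A 1 2 * A 2 1 * A 3 0) := by
  simp [det_succ_row_zero, Fin.sum_univ_succ, Fin.succAbove]
  ring

theorem Matrix.transpose_mul_mul_mul_eq_of_eq {n R : Type*} [Fintype n] [CommSemiring R]
    {J A B : Matrix n n R} (hA : Aᵀ * J * A = J) (hB : Bᵀ * J * B = J) :
    (A * B)ᵀ * J * (A * B) = J := by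
  calc (A * B)ᵀ * J * (A * B) = Bᵀ * (Aᵀ * J * A) * B := by
        simp only [transpose_mul, Matrix.mul_assoc]
    _ = J := by rw [hA, hB]

theorem eq_and_eq_neg_of_sq_add_sq_eq_one {a b c d : ℝ} (h₁ : a ^ 2 + c ^ 2 = 1)
    (h₂ : b ^ 2 + d ^ 2 = 1) (hdet : a * d - b * c = 1) : d = a ∧ b = -c := by
  have h : (d - a) ^ 2 + (b + c) ^ 2 = 0 := by linear_combination h₁ + h₂ - 2 * hdet
  constructor <;> nlinarith [h, sq_nonneg (d - a), sq_nonneg (b + c)]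

theorem Circle.re_sq_add_im_sq (u : Circle) : (u : ℂ).re ^ 2 + (u : ℂ).im ^ 2 = 1 := by
  simpa [Complex.normSq_apply, sq] using Circle.normSq_coe u

noncomputable section

namespace LightlikeLittleGroup

abbrev η : Matrix (Fin 4) (Fin 4) ℝ := diagonal ![1, -1, -1, -1]

abbrev n₀ : Fin 4 → ℝ := ![1, 0, 0, 1]

def nullRotation (w : ℂ) : Matrix (Fin 4) (Fin 4) ℝ :=
  let s := (w.re ^ 2 + w.im ^ 2) / 2
  !![1 + s, w.re, w.im, -s;
     w.re, 1, 0, -w.re;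
     w.im, 0, 1, -w.im;
     s, w.re, w.im, 1 - s]

def rotation (u : Circle) : Matrix (Fin 4) (Fin 4) ℝ :=
  !![1, 0, 0, 0;
     0, (u : ℂ).re, -(u : ℂ).im, 0;
     0, (u : ℂ).im, (u : ℂ).re, 0;
     0, 0, 0, 1]

theorem nullRotation_zero : nullRotation 0 = 1 := by
  ext i j
  fin_cases i <;> fin_cases j <;> simp [nullRotation]

theorem nullRotation_add (w w' : ℂ) :
    nullRotation (w + w') = nullRotation w * nullRotation w' := by
  ext i j
  fin_cases i <;> fin_cases j <;> simp [nullRotation, mul_apply, Fin.sum_univ_four] <;> ring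

theorem rotation_one : rotation 1 = 1 := by
  ext i j
  fin_cases i <;> fin_cases j <;> simp [rotation]

theorem rotation_mul (u v : Circle) : rotation (u * v) = rotation u * rotation v := by
  ext i j
  fin_cases i <;> fin_cases j <;> simp [rotation, mul_apply, Fin.sum_univ_four] <;> ring

theorem rotation_mul_nullRotation (u : Circle) (w : ℂ) :
    rotation u * nullRotation w = nullRotation (u * w) * rotation u := by
  have hu := u.re_sq_add_im_sq
  ext i j
  fin_cases i <;> fin_cases j <;>
    simp [rotation, nullRotation, mul_apply, Fin.sum_univ_four] <;> grind

theorem nullRotation_mul_rotation (w : ℂ) (u : Circle) :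
    nullRotation w * rotation u =
      !![1 + (w.re ^ 2 + w.im ^ 2) / 2, w.re * (u : ℂ).re + w.im * (u : ℂ).im,
           w.im * (u : ℂ).re - w.re * (u : ℂ).im, -((w.re ^ 2 + w.im ^ 2) / 2);
         w.re, (u : ℂ).re, -(u : ℂ).im, -w.re;
         w.im, (u : ℂ).im, (u : ℂ).re, -w.im;
         (w.re ^ 2 + w.im ^ 2) / 2, w.re * (u : ℂ).re + w.im * (u : ℂ).im,
           w.im * (u : ℂ).re - w.re * (u : ℂ).im, 1 - (w.re ^ 2 + w.im ^ 2) / 2] := by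
  ext i j
  fin_cases i <;> fin_cases j <;>
    simp [rotation, nullRotation, mul_apply, Fin.sum_univ_four] <;> ring

def nullRotationHom : Multiplicative ℂ →* Matrix (Fin 4) (Fin 4) ℝ where
  toFun w := nullRotation w.toAdd
  map_one' := nullRotation_zero
  map_mul' w w' := nullRotation_add w.toAdd w'.toAdd

def rotationHom : Circle →* Matrix (Fin 4) (Fin 4) ℝ where
  toFun := rotation
  map_one' := rotation_one
  map_mul' := rotation_mul

def hom : Multiplicative ℂ ⋊[Circle.rotMulAut] Circle →* GL (Fin 4) ℝ :=
  SemidirectProduct.lift nullRotationHom.toHomUnits rotationHom.toHomUnits fun u ↦ by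
    refine MonoidHom.ext fun w ↦ ?_
    simp only [MonoidHom.comp_apply, MulEquiv.coe_toMonoidHom, MulAut.conj_apply,
      eq_mul_inv_iff_mul_eq, Units.ext_iff]
    exact (rotation_mul_nullRotation u w.toAdd).symm

theorem coe_hom (p : Multiplicative ℂ ⋊[Circle.rotMulAut] Circle) :
    (hom p : Matrix (Fin 4) (Fin 4) ℝ) = nullRotation p.left.toAdd * rotation p.right :=
  rfl

theorem transpose_nullRotation_mul_η_mul (w : ℂ) :
    (nullRotation w)ᵀ * η * nullRotation w = η := by
  ext i j
  fin_cases i <;> fin_cases j <;> simp [nullRotation, mul_apply, Fin.sum_univ_four] <;> ring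

theorem transpose_rotation_mul_η_mul (u : Circle) : (rotation u)ᵀ * η * rotation u = η := by
  have hu := u.re_sq_add_im_sq
  ext i j
  fin_cases i <;> fin_cases j <;> simp [rotation, mul_apply, Fin.sum_univ_four] <;> grind

theorem det_nullRotation (w : ℂ) : (nullRotation w).det = 1 := by
  simp [det_fin_four, nullRotation]; ring

theorem det_rotation (u : Circle) : (rotation u).det = 1 := by
  simp [det_fin_four, rotation]; grind [u.re_sq_add_im_sq]

theorem nullRotation_mulVec_n₀ (w : ℂ) : nullRotation w *ᵥ n₀ = n₀ := by
  ext i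
  fin_cases i <;> simp [nullRotation, mulVec, dotProduct, Fin.sum_univ_four]

theorem rotation_mulVec_n₀ (u : Circle) : rotation u *ᵥ n₀ = n₀ := by
  ext i
  fin_cases i <;> simp [rotation, mulVec, dotProduct, Fin.sum_univ_four]

theorem transpose_mul_η_mul_apply (A : Matrix (Fin 4) (Fin 4) ℝ) (i j : Fin 4) :
    (Aᵀ * η * A) i j = A 0 i * A 0 j - A 1 i * A 1 j - A 2 i * A 2 j - A 3 i * A 3 j := by
  simp [mul_apply, Fin.sum_univ_four]; ring

theorem mulVec_n₀_apply (A : Matrix (Fin 4) (Fin 4) ℝ) (i : Fin 4) :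
    (A *ᵥ n₀) i = A i 0 + A i 3 := by
  simp [mulVec, dotProduct, Fin.sum_univ_four]

theorem transpose_mulVec_η_n₀_apply (A : Matrix (Fin 4) (Fin 4) ℝ) (j : Fin 4) :
    (Aᵀ *ᵥ (η *ᵥ n₀)) j = A 0 j - A 3 j := by
  simp [mulVec, dotProduct, Fin.sum_univ_four]; ring

theorem exists_nullRotation_mul_rotation_eq {A : Matrix (Fin 4) (Fin 4) ℝ}
    (hL : Aᵀ * η * A = η) (hdet : A.det = 1) (hfix : A *ᵥ n₀ = n₀) :
    ∃ w u, nullRotation w * rotation u = A := by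
  have hrow : Aᵀ *ᵥ (η *ᵥ n₀) = η *ᵥ n₀ := by
    calc Aᵀ *ᵥ (η *ᵥ n₀) = (Aᵀ * η * A) *ᵥ n₀ := by
          rw [← mulVec_mulVec, hfix, mulVec_mulVec]
      _ = η *ᵥ n₀ := by rw [hL]
  have col (i : Fin 4) := congrFun hfix i
  have row (j : Fin 4) := congrFun hrow j
  have gram (i j : Fin 4) := congrFun₂ hL i j
  simp only [mulVec_n₀_apply, transpose_mulVec_η_n₀_apply, transpose_mul_η_mul_apply]
    at col row gram
  have c0 := col 0; have c1 := col 1; have c2 := col 2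
  have r0 := row 0; have r1 := row 1; have r2 := row 2; have r3 := row 3
  have g00 := gram 0 0; have g11 := gram 1 1; have g22 := gram 2 2
  have g01 := gram 0 1; have g02 := gram 0 2
  simp only [Fin.isValue, cons_val_zero, cons_val_one, cons_val, diagonal_apply_eq, ne_eq,
    Fin.reduceEq, not_false_eq_true, diagonal_apply_ne, add_zero, one_ne_zero, zero_add,
    zero_ne_one] at c0 c1 c2 r0 r1 r2 r3 g00 g11 g22 g01 g02
  have hblock : A 1 1 * A 2 2 - A 1 2 * A 2 1 = 1 := by
    rw [det_fin_four] at hdet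
    grind
  obtain ⟨h22, h12⟩ := eq_and_eq_neg_of_sq_add_sq_eq_one (by grind) (by grind) hblock
  have hnorm : ‖(⟨A 1 1, A 2 1⟩ : ℂ)‖ = 1 := by
    rw [Complex.norm_def, Complex.normSq_mk, Real.sqrt_eq_one]
    grind
  have h01 : A 0 1 = A 1 0 * A 1 1 + A 2 0 * A 2 1 := by grind
  have h02 : A 0 2 = A 2 0 * A 1 1 - A 1 0 * A 2 1 := by grind
  have h00 : A 0 0 = 1 + (A 1 0 ^ 2 + A 2 0 ^ 2) / 2 := by grind
  obtain ⟨u, hu⟩ : ∃ u : Circle, (u : ℂ) = ⟨A 1 1, A 2 1⟩ :=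
    ⟨⟨_, mem_sphere_zero_iff_norm.2 hnorm⟩, rfl⟩
  refine ⟨⟨A 1 0, A 2 0⟩, u, ?_⟩
  rw [nullRotation_mul_rotation, hu]
  ext i j
  fin_cases i <;> fin_cases j <;> simp <;> grind

def IsLittleGroupMatrix (A : Matrix (Fin 4) (Fin 4) ℝ) : Prop :=
  Aᵀ * η * A = η ∧ A.det = 1 ∧ 0 < A 0 0 ∧ A *ᵥ n₀ = n₀

theorem isLittleGroupMatrix_nullRotation_mul_rotation (w : ℂ) (u : Circle) :
    IsLittleGroupMatrix (nullRotation w * rotation u) := by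
  refine ⟨transpose_mul_mul_mul_eq_of_eq (transpose_nullRotation_mul_η_mul w)
      (transpose_rotation_mul_η_mul u), ?_, ?_, ?_⟩
  · rw [det_mul, det_nullRotation, det_rotation, one_mul]
  · rw [nullRotation_mul_rotation]
    simp only [of_apply, cons_val', cons_val_zero, empty_val', cons_val_fin_one]
    positivity
  · rw [← mulVec_mulVec, rotation_mulVec_n₀, nullRotation_mulVec_n₀]

theorem isLittleGroupMatrix_iff {A : Matrix (Fin 4) (Fin 4) ℝ} :
    IsLittleGroupMatrix A ↔ ∃ w u, nullRotation w * rotation u = A := by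
  constructor
  · rintro ⟨hL, hdet, -, hfix⟩
    exact exists_nullRotation_mul_rotation_eq hL hdet hfix
  · rintro ⟨w, u, rfl⟩
    exact isLittleGroupMatrix_nullRotation_mul_rotation w u

theorem mem_range_hom_iff (A : GL (Fin 4) ℝ) : A ∈ hom.range ↔ IsLittleGroupMatrix A := by
  rw [isLittleGroupMatrix_iff, MonoidHom.mem_range]
  constructor
  · rintro ⟨p, rfl⟩
    exact ⟨_, _, (coe_hom p).symm⟩
  · rintro ⟨w, u, hA⟩
    exact ⟨⟨.ofAdd w, u⟩, Units.ext hA⟩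

theorem nullRotation_mul_rotation_inj {w w' : ℂ} {u u' : Circle} :
    nullRotation w * rotation u = nullRotation w' * rotation u' ↔ w = w' ∧ u = u' := by
  refine ⟨fun h ↦ ?_, by rintro ⟨rfl, rfl⟩; rfl⟩
  have h10 := congrFun₂ h 1 0
  have h20 := congrFun₂ h 2 0
  have h11 := congrFun₂ h 1 1
  have h21 := congrFun₂ h 2 1
  simp only [nullRotation_mul_rotation, of_apply, cons_val', cons_val_zero, cons_val_one,
    cons_val_two, empty_val', cons_val_fin_one] at h10 h20 h11 h21
  exact ⟨Complex.ext h10 h20, Circle.ext (Complex.ext h11 h21)⟩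

theorem hom_injective : Function.Injective hom := by
  rintro ⟨w, u⟩ ⟨w', u'⟩ h
  obtain ⟨hw, rfl⟩ := nullRotation_mul_rotation_inj.1 (Units.ext_iff.1 h)
  exact SemidirectProduct.ext (Multiplicative.toAdd.injective hw) rfl

end LightlikeLittleGroup

end

/-- Wigner's little group of the lightlike standard vector `n₀ = (1,0,0,1)`:
the set of proper orthochronous Lorentz matrices (`AᵀηA = η`, `det A = 1`,
`A₀₀ > 0`, with `η = diag(1,-1,-1,-1)`) fixing `n₀` is a group under matrix
multiplication (exhibited as a subgroup of the general linear group), and it is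
isomorphic to the semidirect product `ℂ ⋊ Circle`, the circle group acting on
the additive group `ℂ` by multiplication. -/
theorem little_group_lightlike_iso_euclidean_two :
    (∀ (u : Circle) (w : ℂ),
      Circle.rotMulAut u (Multiplicative.ofAdd w) =
        Multiplicative.ofAdd ((u : ℂ) * w)) ∧
    ∃ G : Subgroup (Matrix.GeneralLinearGroup (Fin 4) ℝ),
      (∀ A : Matrix.GeneralLinearGroup (Fin 4) ℝ,
        A ∈ G ↔
          ((A : Matrix (Fin 4) (Fin 4) ℝ)ᵀ *
              Matrix.diagonal ![(1 : ℝ), -1, -1, -1] *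
              (A : Matrix (Fin 4) (Fin 4) ℝ) =
            Matrix.diagonal ![(1 : ℝ), -1, -1, -1] ∧
          (A : Matrix (Fin 4) (Fin 4) ℝ).det = 1 ∧
          0 < (A : Matrix (Fin 4) (Fin 4) ℝ) 0 0 ∧
          (A : Matrix (Fin 4) (Fin 4) ℝ).mulVec ![(1 : ℝ), 0, 0, 1] =
            ![(1 : ℝ), 0, 0, 1])) ∧
      (∀ A : Matrix (Fin 4) (Fin 4) ℝ,
        (Aᵀ * Matrix.diagonal ![(1 : ℝ), -1, -1, -1] * A =
            Matrix.diagonal ![(1 : ℝ), -1, -1, -1] ∧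
          A.det = 1 ∧ 0 < A 0 0 ∧
          A.mulVec ![(1 : ℝ), 0, 0, 1] = ![(1 : ℝ), 0, 0, 1]) →
        ∃ A' : Matrix.GeneralLinearGroup (Fin 4) ℝ,
          (A' : Matrix (Fin 4) (Fin 4) ℝ) = A) ∧
      Nonempty (G ≃* (Multiplicative ℂ ⋊[Circle.rotMulAut] Circle)) := by
  open LightlikeLittleGroup in
  refine ⟨Circle.rotMulAut_ofAdd, hom.range, mem_range_hom_iff, fun A hA ↦ ?_,
    ⟨(MonoidHom.ofInjective hom_injective).symm⟩⟩
  obtain ⟨w, u, rfl⟩ := isLittleGroupMatrix_iff.1 hA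
  exact ⟨hom ⟨.ofAdd w, u⟩, coe_hom _⟩
end

section
/- Let η be the 4×4 real diagonal matrix diag(1, −1, −1, −1) and let m > 0. For any two vectors p, q : Fin 4 → ℝ with (p 0)² − (p 1)² − (p 2)² − (p 3)² = m², p 0 > 0, (q 0)² − (q 1)² − (q 2)² − (q 3)² = m² and q 0 > 0, there exists a real 4×4 matrix A with Aᵀ · η · A = η, det A = 1, A 0 0 > 0 and A.mulVec p = q. -/
/-!
For a symmetric matrix `η`, the reflection `x ↦ x - (2⟨u, x⟩ / ⟨u, u⟩) u` in a non-null vector `u`,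
where `⟨x, y⟩ = xᵀ η y`, preserves `⟨·, ·⟩` and has determinant `-1`. If `⟨p, p⟩ = ⟨q, q⟩`, the
reflection in `p + q` sends `p` to `-q`, and the reflection in `q` sends `-q` back to `q`; so their
product is a Lorentz matrix of determinant `1` mapping `p` to `q`. For future timelike `p`, `q` the
reverse Cauchy–Schwarz inequality gives `⟨p, q⟩ > 0`, so `p + q` is indeed non-null.

Orthochronicity comes for free: the first row of a Lorentz matrix `A`, read through `η`, is a unit
timelike vector whose time component is `A₀₀`, and its pairing with `p` is `(A p)₀ = q₀ > 0`.
-/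

open Matrix

section MatrixLemmas

variable {m R : Type*} [Fintype m] [CommRing R] {η : Matrix m m R}

theorem dotProduct_mulVec_comm (hη : ηᵀ = η) (x y : m → R) : x ⬝ᵥ η *ᵥ y = y ⬝ᵥ η *ᵥ x := by
  rw [dotProduct_mulVec, ← mulVec_transpose, hη, dotProduct_comm]

theorem transpose_mul_mul_mul_eq {A B : Matrix m m R} (hA : Aᵀ * η * A = η)
    (hB : Bᵀ * η * B = η) : (A * B)ᵀ * η * (A * B) = η := by
  rw [transpose_mul, show Bᵀ * Aᵀ * η * (A * B) = Bᵀ * (Aᵀ * η * A) * B by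
    simp only [Matrix.mul_assoc], hA, hB]

theorem mul_mul_transpose_eq_of_transpose_mul_mul_eq [DecidableEq m] {A : Matrix m m R}
    (hη : η * η = 1) (hA : Aᵀ * η * A = η) : A * η * Aᵀ = η := by
  have hleft : η * Aᵀ * η * A = 1 := by
    rw [show η * Aᵀ * η * A = η * (Aᵀ * η * A) by simp only [Matrix.mul_assoc], hA, hη]
  calc A * η * Aᵀ = A * (η * Aᵀ * η) * η := by simp only [Matrix.mul_assoc, hη, Matrix.mul_one]
    _ = η := by rw [mul_eq_one_comm.mp hleft, Matrix.one_mul]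

end MatrixLemmas

section Reflection

variable {n R : Type*} [Fintype n] [DecidableEq n] [Field R]

def bilinReflection (η : Matrix n n R) (u : n → R) : Matrix n n R :=
  1 - (2 / (u ⬝ᵥ η *ᵥ u)) • vecMulVec u (u ᵥ* η)

variable {η : Matrix n n R} {u : n → R}

theorem bilinReflection_mulVec (x : n → R) :
    bilinReflection η u *ᵥ x = x - (2 * (u ⬝ᵥ η *ᵥ x) / (u ⬝ᵥ η *ᵥ u)) • u := by
  rw [bilinReflection, sub_mulVec, one_mulVec, smul_mulVec, vecMulVec_mulVec, ← dotProduct_mulVec,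
    op_smul_eq_smul, smul_smul, mul_div_right_comm]

theorem bilinReflection_mulVec_self (hu : u ⬝ᵥ η *ᵥ u ≠ 0) : bilinReflection η u *ᵥ u = -u := by
  rw [bilinReflection_mulVec, mul_div_assoc, div_self hu]
  module

theorem bilinReflection_add_mulVec_of_eq [NeZero (2 : R)] (hη : ηᵀ = η) {p q : n → R}
    (hpq : p ⬝ᵥ η *ᵥ p = q ⬝ᵥ η *ᵥ q) (hu : (p + q) ⬝ᵥ η *ᵥ (p + q) ≠ 0) :
    bilinReflection η (p + q) *ᵥ p = -q := by
  have h2 : (p + q) ⬝ᵥ η *ᵥ (p + q) = 2 * ((p + q) ⬝ᵥ η *ᵥ p) := by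
    simp only [mulVec_add, dotProduct_add, add_dotProduct, dotProduct_mulVec_comm hη q p, hpq]
    ring
  rw [bilinReflection_mulVec, h2, mul_div_mul_left _ _ two_ne_zero, div_self]
  · module
  · rw [h2] at hu
    exact right_ne_zero_of_mul hu

theorem det_bilinReflection (hu : u ⬝ᵥ η *ᵥ u ≠ 0) : (bilinReflection η u).det = -1 := by
  rw [bilinReflection, sub_eq_add_neg, ← neg_smul, ← smul_vecMulVec, vecMulVec_eq Unit,
    det_one_add_replicateCol_mul_replicateRow, dotProduct_smul, ← dotProduct_mulVec, smul_eq_mul,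
    neg_mul, div_mul_cancel₀ _ hu]
  norm_num

theorem bilinReflection_transpose_mul_mul_self (hη : ηᵀ = η) (hu : u ⬝ᵥ η *ᵥ u ≠ 0) :
    (bilinReflection η u)ᵀ * η * bilinReflection η u = η := by
  have hw : u ᵥ* η = η *ᵥ u := by rw [← mulVec_transpose, hη]
  have hc : 2 / (u ⬝ᵥ η *ᵥ u) * (u ⬝ᵥ η *ᵥ u) = 2 := div_mul_cancel₀ _ hu
  rw [bilinReflection, hw]
  set w := η *ᵥ u
  set c := 2 / (u ⬝ᵥ w)
  have hηV : η * vecMulVec u w = vecMulVec w w := by rw [mul_vecMulVec]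
  have hVη : vecMulVec w u * η = vecMulVec w w := by rw [vecMulVec_mul, hw]
  have hWV : vecMulVec w w * vecMulVec u w = (u ⬝ᵥ w) • vecMulVec w w := by
    rw [vecMulVec_mul_vecMulVec, vecMulVec_smul, dotProduct_comm]
  simp only [transpose_sub, transpose_one, transpose_smul, transpose_vecMulVec, sub_mul, mul_sub,
    one_mul, mul_one, Matrix.smul_mul, Matrix.mul_smul, hηV, hVη, hWV]
  linear_combination (norm := module) hc • (c • vecMulVec w w)

end Reflection

section Minkowski

variable {n : ℕ}

def minkowskiMetric (n : ℕ) : Matrix (Fin (n + 1)) (Fin (n + 1)) ℝ :=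
  diagonal (vecCons 1 (-1))

theorem minkowskiMetric_transpose : (minkowskiMetric n)ᵀ = minkowskiMetric n :=
  diagonal_transpose _

theorem minkowskiMetric_mul_self : minkowskiMetric n * minkowskiMetric n = 1 := by
  rw [minkowskiMetric, diagonal_mul_diagonal, ← diagonal_one]
  congr 1
  ext i
  cases i using Fin.cases <;> simp

theorem dotProduct_minkowskiMetric_mulVec (x y : Fin (n + 1) → ℝ) :
    x ⬝ᵥ minkowskiMetric n *ᵥ y = x 0 * y 0 - ∑ i : Fin n, x i.succ * y i.succ := by
  simp [minkowskiMetric, dotProduct, mulVec_diagonal, Fin.sum_univ_succ, sub_eq_add_neg]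

theorem dotProduct_minkowskiMetric_mulVec_self (x : Fin (n + 1) → ℝ) :
    x ⬝ᵥ minkowskiMetric n *ᵥ x = x 0 ^ 2 - ∑ i : Fin n, x i.succ ^ 2 := by
  simp only [dotProduct_minkowskiMetric_mulVec, sq]

theorem dotProduct_minkowskiMetric_mulVec_self_le (x : Fin (n + 1) → ℝ) :
    x ⬝ᵥ minkowskiMetric n *ᵥ x ≤ x 0 ^ 2 := by
  rw [dotProduct_minkowskiMetric_mulVec_self, sub_le_self_iff]
  positivity

theorem minkowskiMetric_mulVec_dotProduct_minkowskiMetric_mulVec (x y : Fin (n + 1) → ℝ) :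
    (minkowskiMetric n *ᵥ x) ⬝ᵥ minkowskiMetric n *ᵥ y = x ⬝ᵥ y := by
  rw [dotProduct_mulVec, ← mulVec_transpose, minkowskiMetric_transpose, mulVec_mulVec,
    minkowskiMetric_mul_self, one_mulVec]

theorem dotProduct_minkowskiMetric_mulVec_pos {x y : Fin (n + 1) → ℝ}
    (hx : 0 < x ⬝ᵥ minkowskiMetric n *ᵥ x) (hy : 0 < y ⬝ᵥ minkowskiMetric n *ᵥ y)
    (hx0 : 0 < x 0) (hy0 : 0 < y 0) : 0 < x ⬝ᵥ minkowskiMetric n *ᵥ y := by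
  rw [dotProduct_minkowskiMetric_mulVec_self] at hx hy
  rw [dotProduct_minkowskiMetric_mulVec]
  have hxy := Finset.sum_mul_sq_le_sq_mul_sq Finset.univ (fun i : Fin n => x i.succ)
    (fun i => y i.succ)
  have hX : 0 ≤ ∑ i : Fin n, x i.succ ^ 2 := by positivity
  have hY : 0 ≤ ∑ i : Fin n, y i.succ ^ 2 := by positivity
  nlinarith [mul_pos hx0 hy0]

theorem apply_zero_zero_pos_of_mulVec_apply_zero_pos {A : Matrix (Fin (n + 1)) (Fin (n + 1)) ℝ}
    {p : Fin (n + 1) → ℝ} (hA : Aᵀ * minkowskiMetric n * A = minkowskiMetric n)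
    (hp : 0 < p ⬝ᵥ minkowskiMetric n *ᵥ p) (hp0 : 0 < p 0) (hAp : 0 < (A *ᵥ p) 0) :
    0 < A 0 0 := by
  set r := minkowskiMetric n *ᵥ A 0
  have hr0 : r 0 = A 0 0 := by simp [r, minkowskiMetric, mulVec_diagonal]
  have hrr : r ⬝ᵥ minkowskiMetric n *ᵥ r = 1 := by
    have hrow : (A * minkowskiMetric n * Aᵀ) 0 0 = A 0 ⬝ᵥ minkowskiMetric n *ᵥ A 0 := by
      rw [Matrix.mul_assoc]; rfl
    rw [minkowskiMetric_mulVec_dotProduct_minkowskiMetric_mulVec, ← hrow,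
      mul_mul_transpose_eq_of_transpose_mul_mul_eq minkowskiMetric_mul_self hA]
    simp [minkowskiMetric]
  have hrp : r ⬝ᵥ minkowskiMetric n *ᵥ p = (A *ᵥ p) 0 :=
    minkowskiMetric_mulVec_dotProduct_minkowskiMetric_mulVec _ _
  by_contra! hA0
  have hr_neg : r 0 < 0 := by
    have := dotProduct_minkowskiMetric_mulVec_self_le r
    nlinarith
  have := dotProduct_minkowskiMetric_mulVec_pos (x := -r)
    (by rw [neg_dotProduct, mulVec_neg, dotProduct_neg, neg_neg, hrr]; exact one_pos)
    hp (by simpa) hp0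
  rw [neg_dotProduct, hrp] at this
  linarith

theorem exists_properOrthochronous_mulVec_eq {p q : Fin (n + 1) → ℝ}
    (hp : 0 < p ⬝ᵥ minkowskiMetric n *ᵥ p)
    (hpq : p ⬝ᵥ minkowskiMetric n *ᵥ p = q ⬝ᵥ minkowskiMetric n *ᵥ q)
    (hp0 : 0 < p 0) (hq0 : 0 < q 0) :
    ∃ A : Matrix (Fin (n + 1)) (Fin (n + 1)) ℝ, Aᵀ * minkowskiMetric n * A = minkowskiMetric n ∧
      A.det = 1 ∧ 0 < A 0 0 ∧ A *ᵥ p = q := by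
  have hq : 0 < q ⬝ᵥ minkowskiMetric n *ᵥ q := hpq ▸ hp
  have hu : (p + q) ⬝ᵥ minkowskiMetric n *ᵥ (p + q) ≠ 0 := by
    have := dotProduct_minkowskiMetric_mulVec_pos hp hq hp0 hq0
    simp only [mulVec_add, dotProduct_add, add_dotProduct,
      dotProduct_mulVec_comm minkowskiMetric_transpose q p]
    positivity
  set A := bilinReflection (minkowskiMetric n) q * bilinReflection (minkowskiMetric n) (p + q)
  have hAp : A *ᵥ p = q := by
    rw [← mulVec_mulVec, bilinReflection_add_mulVec_of_eq minkowskiMetric_transpose hpq hu, mulVec_neg,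
      bilinReflection_mulVec_self hq.ne', neg_neg]
  have hA : Aᵀ * minkowskiMetric n * A = minkowskiMetric n :=
    transpose_mul_mul_mul_eq
      (bilinReflection_transpose_mul_mul_self minkowskiMetric_transpose hq.ne')
      (bilinReflection_transpose_mul_mul_self minkowskiMetric_transpose hu)
  refine ⟨A, hA, ?_, apply_zero_zero_pos_of_mulVec_apply_zero_pos hA hp hp0 (hAp ▸ hq0), hAp⟩
  rw [det_mul, det_bilinReflection hq.ne', det_bilinReflection hu]
  norm_num

end Minkowski

/-- The proper orthochronous Lorentz group acts transitively on the positive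
mass-`m` shell: for any `p, q` with `p₀² - p₁² - p₂² - p₃² = m²`, `p₀ > 0`,
`q₀² - q₁² - q₂² - q₃² = m²`, `q₀ > 0`, there is a matrix `A` with `AᵀηA = η`,
`det A = 1`, `A₀₀ > 0` and `A p = q`, where `η = diag(1,-1,-1,-1)`. -/
theorem lorentz_transitive_on_mass_shell (m : ℝ) (hm : 0 < m)
    (p q : Fin 4 → ℝ)
    (hpm : (p 0) ^ 2 - (p 1) ^ 2 - (p 2) ^ 2 - (p 3) ^ 2 = m ^ 2) (hp0 : 0 < p 0)
    (hqm : (q 0) ^ 2 - (q 1) ^ 2 - (q 2) ^ 2 - (q 3) ^ 2 = m ^ 2) (hq0 : 0 < q 0) :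
    ∃ A : Matrix (Fin 4) (Fin 4) ℝ,
      Aᵀ * Matrix.diagonal ![(1 : ℝ), -1, -1, -1] * A =
          Matrix.diagonal ![(1 : ℝ), -1, -1, -1] ∧
      A.det = 1 ∧ 0 < A 0 0 ∧ A.mulVec p = q := by
  have hη : diagonal ![(1 : ℝ), -1, -1, -1] = minkowskiMetric 3 := by
    rw [minkowskiMetric]
    congr 2
    ext i
    fin_cases i <;> rfl
  have hshell (x : Fin 4 → ℝ) :
      x ⬝ᵥ minkowskiMetric 3 *ᵥ x = x 0 ^ 2 - x 1 ^ 2 - x 2 ^ 2 - x 3 ^ 2 := by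
    simp only [dotProduct_minkowskiMetric_mulVec_self, Fin.sum_univ_three, Fin.reduceSucc]
    ring
  rw [hη]
  exact exists_properOrthochronous_mulVec_eq (by rw [hshell, hpm]; positivity)
    (by rw [hshell, hshell, hpm, hqm]) hp0 hq0
end

section
/- Let η be the 4×4 real diagonal matrix diag(1, −1, −1, −1). For any two vectors p, q : Fin 4 → ℝ with (p 0)² − (p 1)² − (p 2)² − (p 3)² = 0, p 0 > 0, (q 0)² − (q 1)² − (q 2)² − (q 3)² = 0 and q 0 > 0, there exists a real 4×4 matrix A with Aᵀ · η · A = η, det A = 1, A 0 0 > 0 and A.mulVec p = q. -/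
/-!
A forward null vector `p` is `p₀ (1, n)` for a unit vector `n`. A rotation of space carries the
null vector `(1, 1, 0, 0)` to `(1, n)`, and a boost along the first axis with rapidity `t`
rescales `(1, 1, 0, 0)` by `eᵗ`. So `q = R_q B R_pᵀ p`, where the boost rescales by `q₀ / p₀`;
rotations fix the time axis, so the time–time entry of this matrix is that of the boost, `cosh t`.
-/

open Matrix Real

local notation "η" => Matrix.diagonal ![(1 : ℝ), -1, -1, -1]

def IsLorentz (A : Matrix (Fin 4) (Fin 4) ℝ) : Prop :=
  Aᵀ * η * A = η

theorem IsLorentz.mul {A B : Matrix (Fin 4) (Fin 4) ℝ} (hA : IsLorentz A) (hB : IsLorentz B) :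
    IsLorentz (A * B) :=
  calc (A * B)ᵀ * η * (A * B) = Bᵀ * (Aᵀ * η * A) * B := by
        simp only [transpose_mul, Matrix.mul_assoc]
    _ = η := by rw [hA, hB]

theorem minkowski_eq_two_smul_single_sub_one : η = 2 • single 0 0 1 - 1 := by
  ext i j
  fin_cases i <;> fin_cases j <;> norm_num [one_apply]

structure IsSpatialRotation (R : Matrix (Fin 4) (Fin 4) ℝ) : Prop where
  transpose_mul_self : Rᵀ * R = 1
  det_eq_one : R.det = 1
  row_zero : R 0 = Pi.single 0 1

namespace IsSpatialRotation

variable {R S : Matrix (Fin 4) (Fin 4) ℝ}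

theorem isLorentz (hR : IsSpatialRotation R) : IsLorentz R := by
  have hfix : Rᵀ * single 0 0 1 * R = single 0 0 1 := by
    ext i j
    simp [mul_apply, single_apply, ite_and, hR.row_zero, Pi.single_apply, eq_comm]
  unfold IsLorentz
  rw [minkowski_eq_two_smul_single_sub_one, Matrix.mul_sub, Matrix.sub_mul, Matrix.mul_smul, Matrix.smul_mul, hfix,
    Matrix.mul_one, hR.transpose_mul_self]

theorem isLorentz_transpose (hR : IsSpatialRotation R) : IsLorentz Rᵀ := by
  have hinv : R * Rᵀ = 1 := mul_eq_one_comm.mp hR.transpose_mul_self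
  calc Rᵀᵀ * η * Rᵀ = R * (Rᵀ * η * R) * Rᵀ := by rw [hR.isLorentz]; simp
    _ = (R * Rᵀ) * η * (R * Rᵀ) := by simp only [Matrix.mul_assoc]
    _ = η := by rw [hinv]; simp

theorem mul_mul_transpose_apply_zero_zero (hR : IsSpatialRotation R) (hS : IsSpatialRotation S)
    (M : Matrix (Fin 4) (Fin 4) ℝ) : (R * M * Sᵀ) 0 0 = M 0 0 := by
  simp [mul_apply, hR.row_zero, hS.row_zero, Pi.single_apply]

end IsSpatialRotation

/-- For `a ≠ -1` this is the rotation in the plane of `e₁` and `(a, b, c)` (Rodrigues' formula);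
for `a = -1` the rotation by `π` about the third axis. -/
theorem exists_isSpatialRotation_mulVec_eq {a b c : ℝ} (h : a ^ 2 + b ^ 2 + c ^ 2 = 1) :
    ∃ R, IsSpatialRotation R ∧ R *ᵥ ![1, 1, 0, 0] = ![1, a, b, c] := by
  rcases eq_or_ne a (-1) with rfl | ha
  · obtain ⟨rfl, rfl⟩ : b = 0 ∧ c = 0 := by constructor <;> nlinarith
    refine ⟨diagonal ![1, -1, -1, 1], ⟨?_, ?_, ?_⟩, ?_⟩
    · ext i j; fin_cases i <;> fin_cases j <;> simp
    · simp [det_diagonal, Fin.prod_univ_four]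
    · ext j; fin_cases j <;> simp
    · ext i; fin_cases i <;> simp [mulVec_diagonal]
  · have hd : 1 + a ≠ 0 := by contrapose! ha; linarith
    refine ⟨!![1, 0, 0, 0; 0, a, -b, -c; 0, b, 1 - b ^ 2 / (1 + a), -(b * c) / (1 + a);
      0, c, -(b * c) / (1 + a), 1 - c ^ 2 / (1 + a)], ⟨?_, ?_, ?_⟩, ?_⟩
    · ext i j
      fin_cases i <;> fin_cases j <;> simp [mul_apply, Fin.sum_univ_four, one_apply] <;> grind
    · simp [det_succ_row_zero, Fin.sum_univ_succ, Fin.succAbove]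
      grind
    · ext j; fin_cases j <;> simp
    · ext i; fin_cases i <;> simp [mulVec, dotProduct, Fin.sum_univ_four]

theorem exists_isSpatialRotation_mulVec_eq_of_lightlike {p : Fin 4 → ℝ}
    (hpm : (p 0) ^ 2 - (p 1) ^ 2 - (p 2) ^ 2 - (p 3) ^ 2 = 0) (hp0 : 0 < p 0) :
    ∃ R, IsSpatialRotation R ∧ R *ᵥ (p 0 • ![1, 1, 0, 0]) = p := by
  have hunit : (p 1 / p 0) ^ 2 + (p 2 / p 0) ^ 2 + (p 3 / p 0) ^ 2 = 1 := by
    field_simp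
    linarith
  obtain ⟨R, hR, hRe⟩ := exists_isSpatialRotation_mulVec_eq hunit
  refine ⟨R, hR, ?_⟩
  rw [mulVec_smul, hRe]
  ext i
  fin_cases i <;> simp [mul_div_cancel₀ _ hp0.ne']

noncomputable def boost (t : ℝ) : Matrix (Fin 4) (Fin 4) ℝ :=
  !![cosh t, sinh t, 0, 0; sinh t, cosh t, 0, 0; 0, 0, 1, 0; 0, 0, 0, 1]

theorem isLorentz_boost (t : ℝ) : IsLorentz (boost t) := by
  unfold IsLorentz boost
  ext i j
  fin_cases i <;> fin_cases j <;> simp [mul_apply, Fin.sum_univ_four] <;>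
    grind [cosh_sq_sub_sinh_sq t]

theorem det_boost (t : ℝ) : (boost t).det = 1 := by
  simp [boost, det_succ_row_zero, Fin.sum_univ_succ, Fin.succAbove]
  linear_combination cosh_sq_sub_sinh_sq t

theorem boost_mulVec (t : ℝ) : boost t *ᵥ ![1, 1, 0, 0] = exp t • ![1, 1, 0, 0] := by
  ext i
  fin_cases i <;> simp [boost, mulVec, dotProduct, Fin.sum_univ_four, cosh_add_sinh]

/-- The proper orthochronous Lorentz group acts transitively on the forward
light cone: for any `p, q` with `p₀² - p₁² - p₂² - p₃² = 0`, `p₀ > 0`,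
`q₀² - q₁² - q₂² - q₃² = 0`, `q₀ > 0`, there is a matrix `A` with `AᵀηA = η`,
`det A = 1`, `A₀₀ > 0` and `A p = q`, where `η = diag(1,-1,-1,-1)`. -/
theorem lorentz_transitive_on_light_cone
    (p q : Fin 4 → ℝ)
    (hpm : (p 0) ^ 2 - (p 1) ^ 2 - (p 2) ^ 2 - (p 3) ^ 2 = 0) (hp0 : 0 < p 0)
    (hqm : (q 0) ^ 2 - (q 1) ^ 2 - (q 2) ^ 2 - (q 3) ^ 2 = 0) (hq0 : 0 < q 0) :
    ∃ A : Matrix (Fin 4) (Fin 4) ℝ,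
      Aᵀ * Matrix.diagonal ![(1 : ℝ), -1, -1, -1] * A =
          Matrix.diagonal ![(1 : ℝ), -1, -1, -1] ∧
      A.det = 1 ∧ 0 < A 0 0 ∧ A.mulVec p = q := by
  obtain ⟨Rp, hRp, hp⟩ := exists_isSpatialRotation_mulVec_eq_of_lightlike hpm hp0
  obtain ⟨Rq, hRq, hq⟩ := exists_isSpatialRotation_mulVec_eq_of_lightlike hqm hq0
  set t := log (q 0 / p 0)
  have hpe : Rpᵀ *ᵥ p = p 0 • ![1, 1, 0, 0] := by
    conv_lhs => rw [← hp]
    rw [mulVec_mulVec, hRp.transpose_mul_self, one_mulVec]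
  have hscale : p 0 * exp t = q 0 := by
    rw [exp_log (div_pos hq0 hp0)]
    field_simp
  refine ⟨Rq * boost t * Rpᵀ, (hRq.isLorentz.mul (isLorentz_boost t)).mul hRp.isLorentz_transpose,
    ?_, ?_, ?_⟩
  · simp [det_mul, hRq.det_eq_one, hRp.det_eq_one, det_boost]
  · rw [hRq.mul_mul_transpose_apply_zero_zero hRp]
    simpa [boost] using cosh_pos t
  · rw [← mulVec_mulVec, ← mulVec_mulVec, hpe, mulVec_smul, boost_mulVec, smul_smul, hscale, hq]
end
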